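/- arXiv:2407.09905 — 4 statements merged into one kernel-verified Lean document; each statement's English description precedes it below -/
import Mathlib

section
/- For a submodular function F on ground set V and permutation σ ordering V such that the first |X| elements are exactly X, the modular function m defined by m(σ(i)) = F(S_i) - F(S_{i-1}) is a lower bound: m(Y) ≤ F(Y) for all Y ⊆ V. -/
/-!
Process `Y` in the order given by `σ`. When `v ∈ Y` is added, the elements of `Y` already present
lie in `S_{σ⁻¹(v)}`, so by submodularity the gain `m(v) = F(S_{σ⁻¹(v)} ∪ {v}) - F(S_{σ⁻¹(v)})` is at
most the gain of adding `v` to those elements. Summing over `Y`, the right-hand sides telescope to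
`F(Y) - F(∅)`.
-/

open Finset

def Submodular {V : Type*} [DecidableEq V] (F : Finset V → ℝ) : Prop :=
  ∀ A B : Finset V, ∀ v : V, A ⊆ B → v ∉ B →
    F (insert v B) - F B ≤ F (insert v A) - F A

/-- `prefixSet σ k` is the set `S_k = {σ(0), …, σ(k-1)}`. -/
def prefixSet {V : Type*} [Fintype V] [DecidableEq V]
    (σ : Fin (Fintype.card V) ≃ V) (k : ℕ) : Finset V :=
  (Finset.univ.filter (fun i : Fin (Fintype.card V) => (i : ℕ) < k)).image σ

theorem Submodular.sum_insert_sub_le {V β : Type*} [DecidableEq V] [LinearOrder β]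
    {F : Finset V → ℝ} (hF : Submodular F) {f : V → β} (hf : Function.Injective f)
    (S : V → Finset V) (hlt : ∀ u v, f u < f v → u ∈ S v) (hself : ∀ v, v ∉ S v)
    (Y : Finset V) :
    ∑ v ∈ Y, (F (insert v (S v)) - F (S v)) ≤ F Y - F ∅ := by
  induction Y using Finset.induction_on_max_value f with
  | empty => simp
  | insert a s ha hmax ih =>
    have hs : s ⊆ S a := fun x hx =>
      hlt x a ((hmax x hx).lt_of_ne (hf.ne (ne_of_mem_of_not_mem hx ha)))
    rw [sum_insert ha]
    linarith [hF s (S a) a hs (hself a)]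

section prefixSet

variable {V : Type*} [Fintype V] [DecidableEq V] (σ : Fin (Fintype.card V) ≃ V)

theorem mem_prefixSet {k : ℕ} {v : V} : v ∈ prefixSet σ k ↔ (σ.symm v : ℕ) < k := by
  simp [prefixSet, ← Equiv.eq_symm_apply]

theorem prefixSet_succ_symm (v : V) :
    prefixSet σ ((σ.symm v : ℕ) + 1) = insert v (prefixSet σ (σ.symm v)) := by
  ext u
  simp only [mem_insert, mem_prefixSet, Nat.lt_succ_iff_lt_or_eq, Fin.val_inj,
    σ.symm.injective.eq_iff, or_comm]

end prefixSet

theorem modular_is_lower_bound_general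
    {V : Type*} [Fintype V] [DecidableEq V]
    (F : Finset V → ℝ) (hsub : Submodular F) (h0 : F ∅ = 0)
    (σ : Fin (Fintype.card V) ≃ V) :
    ∀ Y : Finset V,
      ∑ v ∈ Y, (F (prefixSet σ ((σ.symm v : ℕ) + 1)) - F (prefixSet σ (σ.symm v : ℕ)))
        ≤ F Y := by
  intro Y
  simpa only [prefixSet_succ_symm, h0, sub_zero] using
    hsub.sum_insert_sub_le σ.symm.injective (fun v => prefixSet σ (σ.symm v))
      (fun _ _ h => (mem_prefixSet σ).2 h) (fun _ => by simp [mem_prefixSet]) Y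

/-- The subgradient modular function is a lower bound on `F`. -/
theorem modular_is_lower_bound
    {V : Type*} [Fintype V] [DecidableEq V]
    (F : Finset V → ℝ) (hsub : Submodular F) (h0 : F ∅ = 0)
    (X : Finset V) (σ : Fin (Fintype.card V) ≃ V)
    (hσ : ∀ i : Fin (Fintype.card V), σ i ∈ X ↔ (i : ℕ) < X.card) :
    ∀ Y : Finset V,
      ∑ v ∈ Y, (F (prefixSet σ ((σ.symm v : ℕ) + 1)) - F (prefixSet σ (σ.symm v : ℕ)))
        ≤ F Y :=
  modular_is_lower_bound_general F hsub h0 σ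
end

section
/- For a supermodular function F on ground set V and any sets X, Y ⊆ V, the modular function m_X(Y) := F(X) - Σ_{j ∈ X\Y} F(j | X\{j}) + Σ_{j ∈ Y\X} F({j}) satisfies m_X(Y) ≤ F(Y) and m_X(X) = F(X). -/
open Finset

def Supermodular {V : Type*} [DecidableEq V] (F : Finset V → ℝ) : Prop :=
  ∀ A B : Finset V, ∀ v : V, A ⊆ B → v ∉ B →
    F (insert v A) - F A ≤ F (insert v B) - F B

/-!
Going down from `X` to `X ∩ Y`, each removed `j` costs at most its marginal gain against
`X \ {j}`, the largest it can be by supermodularity; going up from `X ∩ Y` to `Y`, each added `j`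
gains at least `F {j}`, its marginal gain against `∅`, the smallest it can be.
-/

namespace Supermodular

variable {V : Type*} [DecidableEq V] {F : Finset V → ℝ}

theorem marginal_erase_mono (hF : Supermodular F) {S T : Finset V} (hST : S ⊆ T) (j : V) :
    F (insert j (S.erase j)) - F (S.erase j) ≤ F (insert j (T.erase j)) - F (T.erase j) :=
  hF _ _ j (erase_subset_erase j hST) (notMem_erase j T)

theorem sub_sum_marginal_le (hF : Supermodular F) {X D : Finset V} (hDX : D ⊆ X) :
    F X - ∑ j ∈ D, (F (insert j (X.erase j)) - F (X.erase j)) ≤ F (X \ D) := by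
  induction D using Finset.induction_on with
  | empty => simp
  | @insert a D ha ih =>
    have haXD : a ∈ X \ D := mem_sdiff.2 ⟨hDX (mem_insert_self a D), ha⟩
    have hmarg := hF.marginal_erase_mono (sdiff_subset (s := X) (t := D)) a
    rw [insert_erase haXD] at hmarg
    rw [sum_insert ha, sdiff_insert]
    linarith [ih ((subset_insert a D).trans hDX)]

theorem add_sum_singleton_le (hF : Supermodular F) (h0 : F ∅ = 0) {S U : Finset V}
    (hSU : Disjoint S U) : F S + ∑ j ∈ U, F {j} ≤ F (S ∪ U) := by
  induction U using Finset.induction_on with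
  | empty => simp
  | @insert a U ha ih =>
    rw [disjoint_insert_right] at hSU
    have haSU : a ∉ S ∪ U := by simp [ha, hSU.1]
    have hmarg := hF ∅ (S ∪ U) a (empty_subset _) haSU
    rw [h0, sub_zero, insert_empty] at hmarg
    rw [sum_insert ha, union_insert]
    linarith [ih hSU.2]

end Supermodular

theorem supermodular_modular_lower_bound_general
    {V : Type*} [DecidableEq V]
    (F : Finset V → ℝ) (hsup : Supermodular F) (h0 : F ∅ = 0)
    (X Y : Finset V) :
    (F X - ∑ j ∈ X \ Y, (F (insert j (X.erase j)) - F (X.erase j))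
         + ∑ j ∈ Y \ X, F {j} ≤ F Y)
    ∧ (F X - ∑ j ∈ X \ X, (F (insert j (X.erase j)) - F (X.erase j))
         + ∑ j ∈ X \ X, F {j} = F X) := by
  refine ⟨?_, by simp⟩
  calc F X - ∑ j ∈ X \ Y, (F (insert j (X.erase j)) - F (X.erase j)) + ∑ j ∈ Y \ X, F {j}
      ≤ F (X ∩ Y) + ∑ j ∈ Y \ X, F {j} := by
        gcongr
        simpa only [sdiff_sdiff_self_left] using hsup.sub_sum_marginal_le sdiff_subset
    _ ≤ F (X ∩ Y ∪ Y \ X) := by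
        refine hsup.add_sum_singleton_le h0 ?_
        simpa only [inter_comm] using (disjoint_sdiff_inter Y X).symm
    _ = F Y := by rw [inter_comm]; exact congrArg F (sup_inf_sdiff Y X)

/-- The supermodular modular lower bound `m_X` is tight at `X` and below `F` everywhere. -/
theorem supermodular_modular_lower_bound
    {V : Type*} [Fintype V] [DecidableEq V]
    (F : Finset V → ℝ) (hsup : Supermodular F) (h0 : F ∅ = 0)
    (X Y : Finset V) :
    (F X - ∑ j ∈ X \ Y, (F (insert j (X.erase j)) - F (X.erase j))
         + ∑ j ∈ Y \ X, F {j} ≤ F Y)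
    ∧ (F X - ∑ j ∈ X \ X, (F (insert j (X.erase j)) - F (X.erase j))
         + ∑ j ∈ X \ X, F {j} = F X) :=
  supermodular_modular_lower_bound_general F hsup h0 X Y
end

section
/- (Supermodular telescoping bound) If F is a monotone nondecreasing supermodular function on V with F(∅)=0 and supermodular curvature k^F, then for every set S ⊆ V, Σ_{j ∈ S} F({j}) ≥ (1 - k^F) · F(S). -/
open Finset

def MonotoneSetFun {V : Type*} [DecidableEq V] (F : Finset V → ℝ) : Prop :=
  ∀ A B : Finset V, A ⊆ B → F A ≤ F B

/-- Supermodular telescoping bound: `Σ_{j∈S} F({j}) ≥ (1 - k^F)·F(S)`. -/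
theorem supermodular_telescoping_bound
    {V : Type*} [Fintype V] [DecidableEq V] [Nonempty V]
    (F : Finset V → ℝ) (hsup : Supermodular F) (hmono : MonotoneSetFun F)
    (h0 : F ∅ = 0)
    (hpos : ∀ v : V, 0 < F univ - F (univ.erase v)) :
    ∀ S : Finset V,
      (1 - (1 - Finset.univ.inf' Finset.univ_nonempty
            (fun v : V => F {v} / (F univ - F (univ.erase v))))) * F S
        ≤ ∑ j ∈ S, F {j} := by
  set m := Finset.univ.inf' Finset.univ_nonempty
      (fun v : V => F {v} / (F univ - F (univ.erase v))) with hm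
  have hm0 : 0 ≤ m := by
    apply Finset.le_inf'
    intro v _
    have h1 : 0 ≤ F {v} := by
      have := hmono ∅ {v} (Finset.empty_subset _)
      linarith
    exact div_nonneg h1 (le_of_lt (hpos v))
  have hmd : ∀ v : V, m * (F univ - F (univ.erase v)) ≤ F {v} := by
    intro v
    have h1 : m ≤ F {v} / (F univ - F (univ.erase v)) :=
      Finset.inf'_le _ (Finset.mem_univ v)
    calc m * (F univ - F (univ.erase v))
        ≤ (F {v} / (F univ - F (univ.erase v))) * (F univ - F (univ.erase v)) := by
          exact mul_le_mul_of_nonneg_right h1 (le_of_lt (hpos v))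
      _ = F {v} := div_mul_cancel₀ _ (ne_of_gt (hpos v))
  -- key bound: F S ≤ Σ_{j∈S} (F univ - F (univ.erase j))
  have hkey : ∀ S : Finset V, F S ≤ ∑ j ∈ S, (F univ - F (univ.erase j)) := by
    intro S
    induction S using Finset.induction_on with
    | empty => simp [h0]
    | @insert v S hv ih =>
      rw [Finset.sum_insert hv]
      have hsub : S ⊆ univ.erase v := fun x hx =>
        Finset.mem_erase.mpr ⟨fun h => hv (h ▸ hx), Finset.mem_univ x⟩
      have hne : v ∉ univ.erase v := fun h => (Finset.mem_erase.mp h).1 rfl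
      have := hsup S (univ.erase v) v hsub hne
      rw [Finset.insert_erase (Finset.mem_univ v)] at this
      linarith
  intro S
  have h1 : m * F S ≤ ∑ j ∈ S, (m * (F univ - F (univ.erase j))) := by
    rw [← Finset.mul_sum]
    exact mul_le_mul_of_nonneg_left (hkey S) hm0
  have h2 : ∑ j ∈ S, (m * (F univ - F (univ.erase j))) ≤ ∑ j ∈ S, F {j} :=
    Finset.sum_le_sum fun j _ => hmd j
  have : (1 - (1 - m)) = m := by ring
  rw [this]
  linarith
end

section
/- The bounded-curvature coverage function F(τ) = Σ_{s ∈ S} 𝟙[C(τ,s) > 0] · (1 + α(C(τ,s) - 1)) defined on subsets of S × T, where C(τ,s) = |{t : (s,t) ∈ τ}| and 0 ≤ α ≤ 1, is monotone submodular with submodular curvature k_F = 1 - α (when every state can be revisited, i.e., |T| ≥ 2). -/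
/-!
Everything follows from the marginal gain of adding a pair `v = (s, t)` to `τ`: it is `1` if `s`
is not yet visited by `τ` and `α` otherwise. The gain is nonnegative (monotonicity) and, since
`α ≤ 1` and visit counts grow with `τ`, it can only drop as `τ` grows (submodularity). A single
pair has value `1`, while removing `v` from `S × T` leaves `|T| - 1 ≥ 1` visits of `s`, so every
marginal gain against the full set is `α` and the curvature is `1 - α`.
-/

open Finset

/-- Visit count of state `s` in trajectory `τ`. -/
def visitCount {S T : Type*} [DecidableEq S] [DecidableEq T]
    (τ : Finset (S × T)) (s : S) : ℕ :=
  (τ.filter (fun p => p.1 = s)).card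

/-- Bounded-curvature coverage. -/
def bcCoverage {S T : Type*} [Fintype S] [DecidableEq S] [DecidableEq T]
    (α : ℝ) (τ : Finset (S × T)) : ℝ :=
  ∑ s : S, if 0 < visitCount τ s then 1 + α * ((visitCount τ s : ℝ) - 1) else 0

lemma monotoneSetFun_of_le_insert {V : Type*} [DecidableEq V] {F : Finset V → ℝ}
    (hF : ∀ A v, v ∉ A → F A ≤ F (insert v A)) : MonotoneSetFun F := by
  intro A B hAB
  suffices ∀ t ⊆ B \ A, F A ≤ F (A ∪ t) by
    simpa [union_sdiff_of_subset hAB] using this _ subset_rfl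
  intro t ht
  induction t using Finset.induction_on with
  | empty => simp
  | insert a t ha ih =>
    have haB := mem_sdiff.1 (ht (mem_insert_self a t))
    rw [union_insert]
    exact (ih ((subset_insert a t).trans ht)).trans (hF _ _ (by simp [haB.2, ha]))

section VisitCount

variable {S T : Type*} [DecidableEq S] [DecidableEq T]

lemma visitCount_mono {τ τ' : Finset (S × T)} (h : τ ⊆ τ') (s : S) :
    visitCount τ s ≤ visitCount τ' s :=
  card_le_card (filter_subset_filter _ h)

lemma visitCount_insert_self {τ : Finset (S × T)} {v : S × T} (h : v ∉ τ) :
    visitCount (insert v τ) v.1 = visitCount τ v.1 + 1 := by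
  rw [visitCount, filter_insert, if_pos rfl,
    card_insert_of_notMem fun hv => h (mem_filter.1 hv).1]
  rfl

lemma visitCount_insert_of_ne (τ : Finset (S × T)) {v : S × T} {s : S} (h : v.1 ≠ s) :
    visitCount (insert v τ) s = visitCount τ s := by
  rw [visitCount, filter_insert, if_neg h]
  rfl

lemma visitCount_univ [Fintype S] [Fintype T] (s : S) :
    visitCount (univ : Finset (S × T)) s = Fintype.card T := by
  have : (univ : Finset (S × T)).filter (fun p => p.1 = s) = {s} ×ˢ univ := by
    ext p
    simp [Prod.ext_iff, eq_comm]
  rw [visitCount, this, card_product, card_singleton, one_mul, card_univ]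

end VisitCount

section Coverage

variable {S T : Type*} [Fintype S] [DecidableEq S] [DecidableEq T] (α : ℝ)

lemma bcCoverage_insert {τ : Finset (S × T)} {v : S × T} (h : v ∉ τ) :
    bcCoverage α (insert v τ) = bcCoverage α τ + if 0 < visitCount τ v.1 then α else 1 := by
  unfold bcCoverage
  rw [← add_sum_erase _ _ (mem_univ v.1), ← add_sum_erase _ _ (mem_univ v.1),
    sum_congr rfl fun s hs => by rw [visitCount_insert_of_ne τ (ne_of_mem_erase hs).symm],
    visitCount_insert_self h]
  rcases (visitCount τ v.1).eq_zero_or_pos with h0 | hpos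
  · simp [h0, add_comm]
  · simp only [hpos, Nat.succ_pos, if_true]
    push_cast
    ring

lemma bcCoverage_empty : bcCoverage α (∅ : Finset (S × T)) = 0 := by
  simp [bcCoverage, visitCount]

lemma bcCoverage_singleton (v : S × T) : bcCoverage α {v} = 1 := by
  rw [← insert_empty_eq, bcCoverage_insert α (notMem_empty v), bcCoverage_empty]
  simp [visitCount]

lemma bcCoverage_sub_erase {τ : Finset (S × T)} {v : S × T} (hv : v ∈ τ) :
    bcCoverage α τ - bcCoverage α (τ.erase v) = if 1 < visitCount τ v.1 then α else 1 := by
  have hgain := bcCoverage_insert α (notMem_erase v τ)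
  have hcount := visitCount_insert_self (notMem_erase v τ)
  rw [insert_erase hv] at hgain hcount
  rw [hgain, hcount]
  simp

lemma bcCoverage_monotone (hα : 0 ≤ α) : MonotoneSetFun (bcCoverage (S := S) (T := T) α) :=
  monotoneSetFun_of_le_insert fun A v hv => by
    rw [bcCoverage_insert α hv]
    split_ifs <;> linarith

lemma bcCoverage_submodular (hα : α ≤ 1) : Submodular (bcCoverage (S := S) (T := T) α) := by
  intro A B v hAB hvB
  rw [bcCoverage_insert α hvB, bcCoverage_insert α fun h => hvB (hAB h)]
  have := visitCount_mono hAB v.1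
  split_ifs <;> first | omega | linarith

end Coverage

/-- The bounded-curvature coverage function is monotone submodular with
submodular curvature `k_F = 1 - α`. -/
theorem bounded_curvature_coverage
    {S T : Type*} [Fintype S] [DecidableEq S] [Nonempty S]
    [Fintype T] [DecidableEq T]
    (hT : 2 ≤ Fintype.card T) (α : ℝ) (hα0 : 0 < α) (hα1 : α ≤ 1) :
    MonotoneSetFun (bcCoverage (S := S) (T := T) α) ∧
    Submodular (bcCoverage (S := S) (T := T) α) ∧
    (1 - Finset.univ.inf'
        (by
          have : Nonempty T := Fintype.card_pos_iff.mp (by omega)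
          exact Finset.univ_nonempty)
        (fun v : S × T =>
          (bcCoverage α (univ : Finset (S × T))
            - bcCoverage α ((univ : Finset (S × T)).erase v)) /
          bcCoverage α ({v} : Finset (S × T))))
      = 1 - α := by
  refine ⟨bcCoverage_monotone α hα0.le, bcCoverage_submodular α hα1, ?_⟩
  have hgain : ∀ v : S × T, (bcCoverage α univ - bcCoverage α (univ.erase v)) /
      bcCoverage α ({v} : Finset (S × T)) = α := fun v => by
    rw [bcCoverage_sub_erase α (mem_univ v), visitCount_univ, if_pos (by omega),
      bcCoverage_singleton, div_one]
  simp only [hgain, inf'_const]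
end
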